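/- arXiv:2510.21979 — 2 statements merged into one kernel-verified Lean document; each statement's English description precedes it below -/
import Mathlib

section
/- Let G be a finite group and p a prime such that the Sylow p-subgroups of G are cyclic of order p. Let U be a Sylow p-subgroup of G and suppose there are exactly n conjugacy classes in G consisting of elements of order p. Then each such conjugacy class meets U in exactly (p-1)/n elements. -/
/-!
The `p - 1` nontrivial elements of `U` all have order `p`, and by Sylow's theorem every element
of order `p` is conjugate into `U`; so the `n` classes of elements of order `p` partition
`U \ {1}`. The pieces have equal size: two nontrivial `u, v ∈ U` are powers of each other,
`v = u ^ k` and `u = v ^ m`, and `x ↦ x ^ k` maps the conjugates of `u` lying in `U`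
bijectively onto those of `v`, with inverse `x ↦ x ^ m`.
-/

open Subgroup

theorem Nat.card_eq_card_mul_of_card_fiber_eq {α β : Type*} [Finite α] [Finite β]
    (f : α → β) {m : ℕ} (hf : ∀ b, Nat.card {a // f a = b} = m) :
    Nat.card α = Nat.card β * m := by
  have := Fintype.ofFinite β
  rw [← Nat.card_congr (Equiv.sigmaFiberEquiv f), Nat.card_sigma]
  simp [hf]

theorem Nat.card_subtype_ne {α : Type*} [Finite α] (a : α) :
    Nat.card {x // x ≠ a} = Nat.card α - 1 := by
  classical
  rw [← Nat.card_congr (Equiv.optionSubtypeNe a), Finite.card_option, Nat.add_sub_cancel]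

section

variable {G : Type*} [Group G]

theorem IsConj.orderOf_eq {a b : G} (h : IsConj a b) : orderOf a = orderOf b := by
  obtain ⟨c, hc⟩ := h
  exact hc.orderOf_eq _

theorem ConjClasses.exists_mk_eq_and_orderOf_eq_iff {x : G} {n : ℕ} :
    (∃ g : G, ConjClasses.mk x = ConjClasses.mk g ∧ orderOf g = n) ↔ orderOf x = n :=
  ⟨fun ⟨_, hxg, hg⟩ ↦ (ConjClasses.mk_eq_mk_iff_isConj.mp hxg).orderOf_eq.trans hg,
    fun hx ↦ ⟨x, rfl, hx⟩⟩

theorem ConjClasses.mk_pow_eq_mk_pow {u x : G} (k : ℕ)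
    (hx : ConjClasses.mk x = ConjClasses.mk u) :
    ConjClasses.mk (x ^ k) = ConjClasses.mk (u ^ k) :=
  ConjClasses.mk_eq_mk_iff_isConj.mpr ((ConjClasses.mk_eq_mk_iff_isConj.mp hx).pow k)

theorem ConjClasses.pow_pow_eq_self_of_mk_eq {u x : G} {k m : ℕ} (hu : (u ^ k) ^ m = u)
    (hx : ConjClasses.mk x = ConjClasses.mk u) : (x ^ k) ^ m = x := by
  obtain ⟨c, rfl⟩ := isConj_iff.mp (ConjClasses.mk_eq_mk_iff_isConj.mp hx.symm)
  rw [conj_pow, conj_pow, hu]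

theorem ConjClasses.card_eq_card_mul_of_card_inter_eq [Finite G] (s : Set G)
    (Q : ConjClasses G → Prop) {m : ℕ}
    (hm : ∀ c, Q c → Nat.card {x // x ∈ s ∧ ConjClasses.mk x = c} = m) :
    Nat.card {x // x ∈ s ∧ Q (ConjClasses.mk x)} = Nat.card {c // Q c} * m := by
  refine Nat.card_eq_card_mul_of_card_fiber_eq (fun x ↦ ⟨ConjClasses.mk x.1, x.2.2⟩)
    fun c ↦ (Nat.card_congr ?_).trans (hm c.1 c.2)
  exact
    { toFun x := ⟨x.1.1, x.1.2.1, congrArg Subtype.val x.2⟩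
      invFun x := ⟨⟨x.1, x.2.1, x.2.2.symm ▸ c.2⟩, Subtype.ext x.2.2⟩ }

def Subgroup.conjClassInterPowEquiv (H : Subgroup G) {u : G} {k m : ℕ} (hu : (u ^ k) ^ m = u) :
    {x // x ∈ H ∧ ConjClasses.mk x = ConjClasses.mk u} ≃
      {x // x ∈ H ∧ ConjClasses.mk x = ConjClasses.mk (u ^ k)} where
  toFun x := ⟨x.1 ^ k, pow_mem x.2.1 k, ConjClasses.mk_pow_eq_mk_pow k x.2.2⟩
  invFun y :=
    ⟨y.1 ^ m, pow_mem y.2.1 m, (ConjClasses.mk_pow_eq_mk_pow m y.2.2).trans (by rw [hu])⟩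
  left_inv x := Subtype.ext (ConjClasses.pow_pow_eq_self_of_mk_eq hu x.2.2)
  right_inv y := Subtype.ext (ConjClasses.pow_pow_eq_self_of_mk_eq (by rw [hu]) y.2.2)

section PrimeCard

variable {p : ℕ} [Fact p.Prime] {H : Subgroup G}

theorem Subgroup.orderOf_eq_of_card_eq_prime (hH : Nat.card H = p) {x : G} (hx : x ∈ H)
    (hx1 : x ≠ 1) : orderOf x = p := by
  rw [← Subgroup.orderOf_mk x hx]
  exact orderOf_eq_prime (hH ▸ pow_card_eq_one') (by simpa using hx1)

theorem Subgroup.card_orderOf_eq_of_card_eq_prime (hH : Nat.card H = p) :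
    Nat.card {x // x ∈ H ∧ orderOf x = p} = p - 1 := by
  trans Nat.card {x : H // x ≠ 1}
  · exact Nat.card_congr
      { toFun x :=
          ⟨⟨x.1, x.2.1⟩, fun h ↦ (orderOf_eq_prime_iff.mp x.2.2).2 (by simpa using h)⟩
        invFun x :=
          ⟨x.1.1, x.1.2, H.orderOf_eq_of_card_eq_prime hH x.1.2 (by simpa using x.2)⟩ }
  · have : Finite H := Nat.finite_of_card_ne_zero (hH ▸ (Fact.out : p.Prime).ne_zero)
    rw [Nat.card_subtype_ne, hH]

theorem Subgroup.exists_pow_eq_of_card_eq_prime (hH : Nat.card H = p) {u v : G} (hu : u ∈ H)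
    (hu1 : u ≠ 1) (hv : v ∈ H) : ∃ k : ℕ, u ^ k = v := by
  obtain ⟨k, hk⟩ := mem_powers_of_prime_card hH (g := ⟨u, hu⟩) (g' := ⟨v, hv⟩)
    (by simpa using hu1)
  exact ⟨k, congrArg Subtype.val hk⟩

theorem Subgroup.card_conjClass_inter_eq_of_card_eq_prime (hH : Nat.card H = p) {u v : G}
    (hu : u ∈ H) (hu1 : u ≠ 1) (hv : v ∈ H) (hv1 : v ≠ 1) :
    Nat.card {x // x ∈ H ∧ ConjClasses.mk x = ConjClasses.mk u} =
      Nat.card {x // x ∈ H ∧ ConjClasses.mk x = ConjClasses.mk v} := by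
  obtain ⟨k, rfl⟩ := H.exists_pow_eq_of_card_eq_prime hH hu hu1 hv
  obtain ⟨m, hm⟩ := H.exists_pow_eq_of_card_eq_prime hH hv hv1 hu
  exact Nat.card_congr (H.conjClassInterPowEquiv hm)

theorem Sylow.exists_mem_isConj [Finite (Sylow p G)] (P : Sylow p G) {g : G}
    (hg : IsPGroup p (zpowers g)) : ∃ x ∈ P, IsConj g x := by
  obtain ⟨Q, hQ⟩ := hg.exists_le_sylow
  obtain ⟨c, rfl⟩ := MulAction.exists_smul_eq G Q P
  refine ⟨c * g * c⁻¹, ?_, isConj_iff.mpr ⟨c, rfl⟩⟩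
  exact smul_mem_pointwise_smul g (MulAut.conj c) (Q : Subgroup G) (hQ (mem_zpowers g))

theorem Sylow.exists_mem_ne_one_mk_eq_of_orderOf_eq [Finite (Sylow p G)] (P : Sylow p G)
    {g : G} (hg : orderOf g = p) :
    ∃ u ∈ P, u ≠ 1 ∧ ConjClasses.mk g = ConjClasses.mk u := by
  obtain ⟨u, hu, hgu⟩ :=
    P.exists_mem_isConj (IsPGroup.of_card (by rw [Nat.card_zpowers, hg, pow_one]))
  refine ⟨u, hu, ?_, ConjClasses.mk_eq_mk_iff_isConj.mpr hgu⟩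
  rintro rfl
  rw [isConj_one_left.mp hgu, orderOf_one] at hg
  exact (Fact.out : p.Prime).ne_one hg.symm

theorem Sylow.card_conjClass_inter_eq_of_card_eq_prime [Finite (Sylow p G)] (P : Sylow p G)
    (hP : Nat.card P = p) {g g' : G} (hg : orderOf g = p) (hg' : orderOf g' = p) :
    Nat.card {x // x ∈ (P : Subgroup G) ∧ ConjClasses.mk x = ConjClasses.mk g} =
      Nat.card {x // x ∈ (P : Subgroup G) ∧ ConjClasses.mk x = ConjClasses.mk g'} := by
  obtain ⟨u, hu, hu1, hgu⟩ := P.exists_mem_ne_one_mk_eq_of_orderOf_eq hg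
  obtain ⟨u', hu', hu1', hgu'⟩ := P.exists_mem_ne_one_mk_eq_of_orderOf_eq hg'
  rw [hgu, hgu']
  exact (P : Subgroup G).card_conjClass_inter_eq_of_card_eq_prime hP hu hu1 hu' hu1'

end PrimeCard

end

theorem conjClass_meets_sylow (G : Type*) [Group G] [Finite G] (p : ℕ) [Fact p.Prime]
    (U : Sylow p G) (hU : Nat.card U = p) (n : ℕ)
    (hn : Nat.card {c : ConjClasses G // ∃ g : G, c = ConjClasses.mk g ∧ orderOf g = p} = n)
    (c : ConjClasses G) (hc : ∃ g : G, c = ConjClasses.mk g ∧ orderOf g = p) :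
    Nat.card {g : G // g ∈ (U : Subgroup G) ∧ ConjClasses.mk g = c} = (p - 1) / n := by
  obtain ⟨g, rfl, hg⟩ := hc
  have hcount := ConjClasses.card_eq_card_mul_of_card_inter_eq (U : Set G)
    (fun c ↦ ∃ g : G, c = ConjClasses.mk g ∧ orderOf g = p) fun c ⟨g', hc', hg'⟩ ↦
      hc' ▸ U.card_conjClass_inter_eq_of_card_eq_prime hU hg' hg
  have hcard_orderOf : Nat.card {x // x ∈ (U : Set G) ∧
      ∃ g : G, ConjClasses.mk x = ConjClasses.mk g ∧ orderOf g = p} = p - 1 := by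
    simp_rw [ConjClasses.exists_mk_eq_and_orderOf_eq_iff]
    exact (U : Subgroup G).card_orderOf_eq_of_card_eq_prime hU
  have hn0 : 0 < n := hn ▸ Nat.card_pos_iff.mpr ⟨⟨⟨_, g, rfl, hg⟩⟩, inferInstance⟩
  rw [hcard_orderOf, hn] at hcount
  rw [hcount, Nat.mul_div_cancel_left _ hn0]
end

section
/- Let G be a finite group and p a prime such that every Sylow p-subgroup of G is cyclic of order p. If U is a Sylow p-subgroup of G, then the number of G-conjugacy classes of elements of order p in G equals (p-1)/|N_G(U)/C_G(U)|, and in particular |N_G(U)/C_G(U)| divides p-1. -/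
/-!
Let `N = N_G(U)` act on `U \ {1}` by conjugation. A nontrivial `u ∈ U` generates `U`, so
its stabilizer is `C_G(U) ∩ N` and every orbit has `|N : C_G(U)|` elements. Every element of
order `p` is conjugate into `U`, and if `c u c⁻¹ = v` with `u, v ∈ U \ {1}` then `c` maps
`⟨u⟩ = U` to `⟨v⟩ = U`, so `c ∈ N`: the `N`-orbits on `U \ {1}` are exactly the conjugacy
classes of elements of order `p`. Hence `p - 1 = (number of classes) * |N : C_G(U)|`.
-/

open Subgroup MulAction

def SubMulAction.neOne (M A : Type*) [Group M] [Monoid A] [MulDistribMulAction M A] :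
    SubMulAction M A where
  carrier := {1}ᶜ
  smul_mem' g a ha h := ha (by simpa using congrArg (g⁻¹ • ·) h)

theorem SubMulAction.card_neOne (M A : Type*) [Group M] [Monoid A] [MulDistribMulAction M A]
    [Finite A] : Nat.card (neOne M A) = Nat.card A - 1 := by
  change Nat.card ({1}ᶜ : Set A) = _
  rw [Nat.card_coe_set_eq, Set.ncard_compl, Set.ncard_singleton]

theorem MulAction.card_eq_card_quotient_mul_of_card_orbit_eq {G α : Type*} [Group G]
    [MulAction G α] [Finite α] {k : ℕ} (h : ∀ a : α, Nat.card (orbit G a) = k) :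
    Nat.card α = Nat.card (orbitRel.Quotient G α) * k := by
  have := Fintype.ofFinite (orbitRel.Quotient G α)
  rw [Nat.card_congr (selfEquivSigmaOrbits G α), Nat.card_sigma]
  simp [h, Nat.card_eq_fintype_card]

namespace Subgroup

variable {G : Type*} [Group G] {H : Subgroup G}

theorem zpowers_eq_of_card_eq_prime {p : ℕ} [Fact p.Prime] (hH : Nat.card H = p) {g : G}
    (hg : g ∈ H) (hg1 : g ≠ 1) : zpowers g = H := by
  have := zpowers_eq_top_of_prime_card hH (g := ⟨g, hg⟩) (by simpa using hg1)
  simpa [MonoidHom.map_zpowers, ← MonoidHom.range_eq_map] using congrArg (map H.subtype) this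

theorem stabilizer_normalizer_eq_of_zpowers_eq {h : H} (hh : zpowers (h : G) = H) :
    stabilizer (normalizer (H : Set G)) h =
      (centralizer (H : Set G)).subgroupOf (normalizer (H : Set G)) := by
  have hC : centralizer (H : Set G) = centralizer {(h : G)} := by
    rw [← centralizer_closure {(h : G)}, ← zpowers_eq_closure, hh]
  ext n
  rw [mem_stabilizer_iff, mem_subgroupOf, hC, mem_centralizer_singleton_iff, Subtype.ext_iff]
  change (n : G) * h * (n : G)⁻¹ = h ↔ _
  rw [mul_inv_eq_iff_eq_mul, eq_comm]

theorem mem_normalizer_of_conj_eq {g h c : G} (hg : zpowers g = H) (hh : zpowers h = H)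
    (hc : c * g * c⁻¹ = h) : c ∈ normalizer (H : Set G) := by
  rw [mem_normalizer_iff_map_conj_eq, ← hg, MonoidHom.map_zpowers, MonoidHom.coe_coe,
    MulAut.conj_apply, hc, hh, hg]

end Subgroup

namespace Sylow

variable {G : Type*} [Group G] {p : ℕ} [Fact p.Prime] {U : Sylow p G}

theorem exists_isConj_mem [Finite G] (P : Sylow p G) {g : G} (hg : orderOf g = p) :
    ∃ u ∈ P, IsConj u g := by
  obtain ⟨Q, hQ⟩ := (IsPGroup.of_card (G := zpowers g) (n := 1)
    (by rw [Nat.card_zpowers, hg, pow_one])).exists_le_sylow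
  obtain ⟨x, rfl⟩ := MulAction.exists_smul_eq G Q P
  refine ⟨x * g * x⁻¹, ?_, isConj_iff.mpr ⟨x⁻¹, by group⟩⟩
  rw [← SetLike.mem_coe, coe_smul]
  exact ⟨g, hQ (mem_zpowers g), rfl⟩

theorem zpowers_coe_neOne (hU : Nat.card U = p)
    (u : SubMulAction.neOne (normalizer ((U : Subgroup G) : Set G)) U) :
    zpowers ((u : U) : G) = U :=
  zpowers_eq_of_card_eq_prime hU (u : U).2 fun h => u.2 (Subtype.ext h)

theorem isConj_iff_orbitRel_neOne (hU : Nat.card U = p)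
    (u v : SubMulAction.neOne (normalizer ((U : Subgroup G) : Set G)) U) :
    IsConj ((u : U) : G) ((v : U) : G) ↔
      orbitRel (normalizer ((U : Subgroup G) : Set G)) _ u v := by
  rw [isConj_comm, isConj_iff, orbitRel_apply, mem_orbit_iff]
  constructor
  · rintro ⟨c, hc⟩
    have hcN : c ∈ normalizer ((U : Subgroup G) : Set G) :=
      mem_normalizer_of_conj_eq (zpowers_coe_neOne hU v) (zpowers_coe_neOne hU u) hc
    exact ⟨⟨c, hcN⟩, Subtype.ext (Subtype.ext hc)⟩
  · rintro ⟨n, rfl⟩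
    exact ⟨n, rfl⟩

theorem card_orbit_neOne (hU : Nat.card U = p)
    (u : SubMulAction.neOne (normalizer ((U : Subgroup G) : Set G)) U) :
    Nat.card (orbit (normalizer ((U : Subgroup G) : Set G)) u) =
      (centralizer ((U : Subgroup G) : Set G)).relIndex
        (normalizer ((U : Subgroup G) : Set G)) := by
  rw [Nat.card_coe_set_eq, ← index_stabilizer, SubMulAction.stabilizer_of_subMul,
    stabilizer_normalizer_eq_of_zpowers_eq (zpowers_coe_neOne hU u), relIndex]

theorem card_conjClasses_orderOf_eq_card_orbitRel_quotient [Finite G] (hU : Nat.card U = p) :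
    Nat.card {c : ConjClasses G // ∃ g : G, c = ConjClasses.mk g ∧ orderOf g = p} =
      Nat.card (orbitRel.Quotient (normalizer ((U : Subgroup G) : Set G))
        (SubMulAction.neOne (normalizer ((U : Subgroup G) : Set G)) U)) := by
  let f : SubMulAction.neOne (normalizer ((U : Subgroup G) : Set G)) U →
      {c : ConjClasses G // ∃ g : G, c = ConjClasses.mk g ∧ orderOf g = p} := fun u =>
    ⟨ConjClasses.mk _, _, rfl, by rw [← Nat.card_zpowers, zpowers_coe_neOne hU u, hU]⟩
  have hf : Function.Surjective f := by
    rintro ⟨c, g, rfl, hg⟩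
    obtain ⟨u, hu, hug⟩ := exists_isConj_mem U hg
    have hu1 : u ≠ 1 := by
      rintro rfl
      rw [isConj_one_right.mp hug, orderOf_one] at hg
      exact (Fact.out : p.Prime).one_lt.ne hg
    exact ⟨⟨⟨u, hu⟩, fun h => hu1 (congrArg Subtype.val h)⟩,
      Subtype.ext (ConjClasses.mk_eq_mk_iff_isConj.mpr hug)⟩
  refine Nat.card_congr ((Quotient.congrRight fun u v => ?_).trans
    (Setoid.quotientKerEquivOfSurjective f hf)).symm
  rw [Setoid.ker_def, Subtype.ext_iff, ConjClasses.mk_eq_mk_iff_isConj,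
    isConj_iff_orbitRel_neOne hU]

end Sylow

theorem num_conjClasses_of_order_p (G : Type*) [Group G] [Finite G] (p : ℕ) [Fact p.Prime]
    (hSyl : ∀ Q : Sylow p G, Nat.card Q = p) (U : Sylow p G) :
    Nat.card {c : ConjClasses G // ∃ g : G, c = ConjClasses.mk g ∧ orderOf g = p} =
      (p - 1) / (Subgroup.centralizer ((U : Subgroup G) : Set G)).relIndex
        (Subgroup.normalizer ((U : Subgroup G) : Set G)) ∧
    (Subgroup.centralizer ((U : Subgroup G) : Set G)).relIndex
        (Subgroup.normalizer ((U : Subgroup G) : Set G)) ∣ p - 1 := by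
  have hU := hSyl U
  have key : p - 1 =
      Nat.card {c : ConjClasses G // ∃ g : G, c = ConjClasses.mk g ∧ orderOf g = p} *
        (centralizer ((U : Subgroup G) : Set G)).relIndex
          (normalizer ((U : Subgroup G) : Set G)) := by
    rw [Sylow.card_conjClasses_orderOf_eq_card_orbitRel_quotient hU,
      ← card_eq_card_quotient_mul_of_card_orbit_eq (Sylow.card_orbit_neOne (U := U) hU),
      SubMulAction.card_neOne, hU]
  have hpos : 0 < (centralizer ((U : Subgroup G) : Set G)).relIndex
      (normalizer ((U : Subgroup G) : Set G)) := Nat.pos_of_ne_zero index_ne_zero_of_finite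
  exact ⟨by rw [key, Nat.mul_div_cancel _ hpos], Dvd.intro_left _ key.symm⟩
end
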